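/- Let f : ℝᵖ → ℝ be a continuous strictly convex function, and for each t ≥ 0 let β̂(t) denote the unique minimizer of f over the closed ℓ¹-ball {β ∈ ℝᵖ : ‖β‖₁ ≤ t} (which exists and is unique by compactness and strict convexity). Then the Lasso solution path t ↦ β̂(t) is continuous on [0, ∞). -/

import Mathlib

/-!
The ℓ¹ ball is the closed ball of a norm on a finite-dimensional space, so it suffices to treat
minimizers over closed balls `‖β‖ ≤ t`. For `t` near `t₀` they lie in a fixed compact ball, so
continuity at `t₀` reduces to showing that every cluster point `a` equals `β̂ t₀`. Feasibility
passes to the limit, and `a` is optimal because any competitor `β` at radius `t₀` is the limit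
of the competitors `(t / t₀) • β` at radius `t`; strict convexity makes the minimizer unique.
-/

open Filter Topology Metric Set

theorem StrictConvexOn.comp_linearMap {𝕜 E F β : Type*} [Semiring 𝕜] [PartialOrder 𝕜]
    [AddCommMonoid E] [AddCommMonoid F] [AddCommMonoid β] [PartialOrder β] [Module 𝕜 E]
    [Module 𝕜 F] [SMul 𝕜 β] {f : F → β} {s : Set F} (hf : StrictConvexOn 𝕜 s f)
    (g : E →ₗ[𝕜] F) (hg : Function.Injective g) : StrictConvexOn 𝕜 (g ⁻¹' s) (f ∘ g) :=
  ⟨hf.1.linear_preimage g, fun x hx y hy hxy a b ha hb hab => by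
    simpa only [Function.comp_apply, map_add, map_smul] using
      hf.2 hx hy (hg.ne hxy) ha hb hab⟩

section ArgminOnClosedBall

variable {E : Type*} [NormedAddCommGroup E] [NormedSpace ℝ E] {f : E → ℝ}

/-- The argmin correspondence `t ↦ argmin_{‖β‖ ≤ t} f` has closed graph. -/
theorem isMinOn_closedBall_of_tendsto {ι : Type*} {l : Filter ι} [l.NeBot] (hf : Continuous f)
    {r : ι → ℝ} {y : ι → E} {t : ℝ} {a : E} (hr : Tendsto r l (𝓝 t)) (hy : Tendsto y l (𝓝 a))
    (hmin : ∀ᶠ i in l, y i ∈ closedBall 0 (r i) ∧ IsMinOn f (closedBall 0 (r i)) (y i)) :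
    a ∈ closedBall 0 t ∧ IsMinOn f (closedBall 0 t) a := by
  simp only [mem_closedBall_zero_iff] at hmin ⊢
  have ha : ‖a‖ ≤ t := le_of_tendsto_of_tendsto hy.norm hr (hmin.mono fun i hi => hi.1)
  refine ⟨ha, fun β hβ => show f a ≤ f β from ?_⟩
  rw [mem_closedBall_zero_iff] at hβ
  obtain rfl | ht := (norm_nonneg a).trans ha |>.eq_or_lt
  · rw [norm_le_zero_iff.1 ha, norm_le_zero_iff.1 hβ]
  have hscaled : Tendsto (fun i => (r i / t) • β) l (𝓝 β) := by
    simpa [div_self ht.ne'] using (hr.div_const t).smul_const β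
  refine le_of_tendsto_of_tendsto ((hf.tendsto a).comp hy) ((hf.tendsto β).comp hscaled) ?_
  filter_upwards [hmin] with i ⟨hyi, hmini⟩
  refine hmini (mem_closedBall_zero_iff.2 ?_)
  have hri : 0 ≤ r i := (norm_nonneg _).trans hyi
  calc ‖(r i / t) • β‖ = r i / t * ‖β‖ := by
        rw [norm_smul, Real.norm_of_nonneg (div_nonneg hri ht.le)]
    _ ≤ r i / t * t := by gcongr
    _ = r i := div_mul_cancel₀ _ ht.ne'

theorem StrictConvexOn.continuousOn_of_isMinOn_closedBall [ProperSpace E]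
    (hsc : StrictConvexOn ℝ univ f) (hf : Continuous f) {x : ℝ → E}
    (hx : ∀ t, 0 ≤ t → x t ∈ closedBall 0 t ∧ IsMinOn f (closedBall 0 t) (x t)) :
    ContinuousOn x (Ici 0) := by
  intro t ht
  have hev : ∀ᶠ s in 𝓝[Ici 0] t, x s ∈ closedBall 0 s ∧ IsMinOn f (closedBall 0 s) (x s) :=
    eventually_nhdsWithin_of_forall hx
  refine (isCompact_closedBall 0 (t + 1)).tendsto_nhds_of_unique_mapClusterPt ?_ fun a _ ha => ?_
  · filter_upwards [hev, nhdsWithin_le_nhds (eventually_le_nhds (lt_add_one t))] with s hs hst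
    exact closedBall_subset_closedBall hst hs.1
  · obtain ⟨U, hU, hxU⟩ := mapClusterPt_iff_ultrafilter.1 ha
    obtain ⟨haB, hamin⟩ := isMinOn_closedBall_of_tendsto hf
      (tendsto_nhdsWithin_iff.1 (tendsto_id.mono_left hU)).1 hxU (hU hev)
    exact (hsc.subset (subset_univ _) (convex_closedBall 0 t)).eq_of_isMinOn hamin (hx t ht).2
      haB (hx t ht).1

end ArgminOnClosedBall

open Finset in
/-- Continuity of the Lasso solution path: if `f` is continuous and strictly
convex and `β̂ t` is the (unique) minimizer of `f` over the ℓ¹-ball of radius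
`t` for each `t ≥ 0`, then `t ↦ β̂ t` is continuous on `[0, ∞)`. -/
theorem lasso_path_continuous
    {p : ℕ} (f : (Fin p → ℝ) → ℝ)
    (hf_cont : Continuous f)
    (hf_sconv : StrictConvexOn ℝ Set.univ f)
    (βhat : ℝ → (Fin p → ℝ))
    (hβhat : ∀ t : ℝ, 0 ≤ t →
      (∑ j, |βhat t j|) ≤ t ∧
        ∀ β : Fin p → ℝ, (∑ j, |β j|) ≤ t → f (βhat t) ≤ f β) :
    ContinuousOn βhat (Set.Ici 0) := by
  have hnorm (β : PiLp 1 fun _ : Fin p => ℝ) : ‖β‖ = ∑ j, |β j| := by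
    simp [PiLp.norm_eq_of_L1]
  have hpath : ContinuousOn (fun t => WithLp.toLp 1 (βhat t)) (Ici 0) := by
    refine (hf_sconv.comp_linearMap (WithLp.linearEquiv 1 ℝ (Fin p → ℝ)).toLinearMap
      (WithLp.linearEquiv 1 ℝ _).injective).continuousOn_of_isMinOn_closedBall
      (hf_cont.comp (PiLp.continuous_ofLp 1 _)) fun t ht => ?_
    refine ⟨by simpa [hnorm] using (hβhat t ht).1, fun β hβ => ?_⟩
    rw [mem_closedBall_zero_iff, hnorm] at hβ
    exact (hβhat t ht).2 β hβ
  exact (PiLp.continuous_ofLp 1 _).comp_continuousOn hpath
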